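/- arXiv:1810.01195 — 2 statements merged into one kernel-verified Lean document; each statement's English description precedes it below -/
import Mathlib

section
/- A stationary functional AR(1) process X_t = Φ(X_{t-1}) + ε_t, where Φ is a bounded linear operator on H with ‖Φ‖_op < 1 and (ε_t) are i.i.d. mean-zero elements of H with E‖ε_0‖² < ∞, admits the stationary solution X_t = Σ_{j=0}^∞ Φ^j(ε_{t-j}) and is L²-m-approximable. -/
/-!
Each term of `Σ_j Φ^j ε_{t-j}` has `L²`-norm at most `‖Φ‖^j ‖ε_0‖_{L²}`, so the series converges
almost surely and in `L²`; shifting the summation index gives the AR(1) recursion. `X_t` is one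
fixed measurable function of the path `(ε_{t-j})_{j ≥ 0}`, whose law is the same infinite product
for every `t`. Finally `X_0 - X_0^{(m)}` is the difference of the tails `Σ_{j ≥ m} Φ^j ε_{-j}` and
`Σ_{j ≥ m} Φ^j ε'_{-j}`, each of `L²`-norm `O(‖Φ‖^m)`, which is summable in `m`.
-/

open MeasureTheory ProbabilityTheory Filter Finset
open scoped ENNReal Topology

section

variable {𝕜 E : Type*} [NontriviallyNormedField 𝕜] [NormedAddCommGroup E] [NormedSpace 𝕜 E]

theorem ContinuousLinearMap.enorm_pow_apply_le (Φ : E →L[𝕜] E) (n : ℕ) (x : E) :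
    ‖(Φ ^ n) x‖ₑ ≤ ‖Φ‖ₑ ^ n * ‖x‖ₑ := by
  induction n with
  | zero => simp
  | succ n ih =>
    calc ‖(Φ ^ (n + 1)) x‖ₑ = ‖Φ ((Φ ^ n) x)‖ₑ := by rw [pow_succ']; rfl
      _ ≤ ‖Φ‖ₑ * (‖Φ‖ₑ ^ n * ‖x‖ₑ) := Φ.le_opENorm_of_le ih
      _ = ‖Φ‖ₑ ^ (n + 1) * ‖x‖ₑ := by rw [pow_succ', mul_assoc]

theorem ContinuousLinearMap.inv_one_sub_enorm_ne_top {Φ : E →L[𝕜] E} (hΦ : ‖Φ‖ < 1) :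
    (1 - ‖Φ‖ₑ)⁻¹ ≠ ∞ :=
  ENNReal.inv_ne_top.2 (tsub_pos_of_lt (by simpa [← ofReal_norm] using hΦ)).ne'

variable {Ω : Type*} [MeasurableSpace Ω] {μ : Measure Ω} {p : ℝ≥0∞}

theorem eLpNorm_tsum_le [CompleteSpace E] (hp : 1 ≤ p) {f : ℕ → Ω → E}
    (hf : ∀ n, AEStronglyMeasurable (f n) μ) :
    eLpNorm (fun ω => ∑' n, f n ω) p μ ≤ ∑' n, eLpNorm (f n) p μ := by
  by_cases hfin : ∑' n, eLpNorm (f n) p μ = ∞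
  · exact hfin ▸ le_top
  have hsum : ∀ᵐ ω ∂μ, Tendsto (fun n => ∑ i ∈ range n, f i ω) atTop (𝓝 (∑' n, f n ω)) := by
    filter_upwards [summable_norm_of_tsum_eLpNorm_ne_top hp hf hfin] with ω hω
    exact hω.of_norm.hasSum.tendsto_sum_nat
  refine Lp.eLpNorm_le_of_ae_tendsto (Eventually.of_forall fun n => ?_)
    (fun n => Finset.aestronglyMeasurable_fun_sum _ fun i _ => hf i) hsum
  calc eLpNorm (fun ω => ∑ i ∈ range n, f i ω) p μ ≤ ∑ i ∈ range n, eLpNorm (f i) p μ := by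
        rw [← Finset.sum_fn]
        exact eLpNorm_sum_le (fun i _ => hf i) hp
    _ ≤ ∑' i, eLpNorm (f i) p μ := ENNReal.sum_le_tsum _

variable (Φ : E →L[𝕜] E)

theorem eLpNorm_pow_comp_le (n : ℕ) (f : Ω → E) :
    eLpNorm (fun ω => (Φ ^ n) (f ω)) p μ ≤ ‖Φ‖ₑ ^ n * eLpNorm f p μ := by
  have h := eLpNorm_le_mul_eLpNorm_of_ae_le_mul' (c := ‖Φ‖₊ ^ n)
    (ae_of_all μ fun ω => Φ.enorm_pow_apply_le n (f ω)) p
  rwa [ENNReal.coe_pow] at h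

theorem tsum_eLpNorm_pow_comp_le {η : ℕ → Ω → E} {K : ℝ≥0∞} (hK : ∀ j, eLpNorm (η j) p μ ≤ K)
    (n : ℕ) :
    ∑' j, eLpNorm (fun ω => (Φ ^ (n + j)) (η j ω)) p μ ≤ ‖Φ‖ₑ ^ n * (1 - ‖Φ‖ₑ)⁻¹ * K :=
  calc ∑' j, eLpNorm (fun ω => (Φ ^ (n + j)) (η j ω)) p μ
      ≤ ∑' j, ‖Φ‖ₑ ^ n * ‖Φ‖ₑ ^ j * K :=
        ENNReal.tsum_le_tsum fun j => (eLpNorm_pow_comp_le Φ _ _).trans <| by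
          rw [pow_add]; gcongr; exact hK j
    _ = ‖Φ‖ₑ ^ n * (1 - ‖Φ‖ₑ)⁻¹ * K := by
        rw [ENNReal.tsum_mul_right, ENNReal.tsum_mul_left, ENNReal.tsum_geometric]

variable [CompleteSpace E]

theorem eLpNorm_tsum_pow_comp_le (hp : 1 ≤ p) {η : ℕ → Ω → E}
    (hη : ∀ j, AEStronglyMeasurable (η j) μ) {K : ℝ≥0∞} (hK : ∀ j, eLpNorm (η j) p μ ≤ K)
    (n : ℕ) :
    eLpNorm (fun ω => ∑' j, (Φ ^ (n + j)) (η j ω)) p μ ≤ ‖Φ‖ₑ ^ n * (1 - ‖Φ‖ₑ)⁻¹ * K :=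
  (eLpNorm_tsum_le hp fun j => (Φ ^ (n + j)).continuous.comp_aestronglyMeasurable (hη j)).trans
    (tsum_eLpNorm_pow_comp_le Φ hK n)

variable {Φ} in
theorem ae_summable_pow_comp (hΦ : ‖Φ‖ < 1) (hp : 1 ≤ p) {η : ℕ → Ω → E}
    (hη : ∀ j, AEStronglyMeasurable (η j) μ) {K : ℝ≥0∞} (hK : K ≠ ∞)
    (hηK : ∀ j, eLpNorm (η j) p μ ≤ K) :
    ∀ᵐ ω ∂μ, Summable fun j => (Φ ^ j) (η j ω) := by
  have hfin : ∑' j, eLpNorm (fun ω => (Φ ^ j) (η j ω)) p μ ≠ ∞ := by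
    refine ne_top_of_le_ne_top ?_ (by simpa using tsum_eLpNorm_pow_comp_le Φ hηK 0)
    exact ENNReal.mul_ne_top (Φ.inv_one_sub_enorm_ne_top hΦ) hK
  filter_upwards [summable_norm_of_tsum_eLpNorm_ne_top hp
    (fun j => (Φ ^ j).continuous.comp_aestronglyMeasurable (hη j)) hfin] with ω hω
  exact hω.of_norm

end

theorem sqrt_integral_norm_sq_le_toReal {Ω E : Type*} [MeasurableSpace Ω] {μ : Measure Ω}
    [NormedAddCommGroup E] {f : Ω → E} (hf : AEStronglyMeasurable f μ) {C : ℝ≥0∞} (hC : C ≠ ∞)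
    (h : eLpNorm f 2 μ ≤ C) :
    √(∫ ω, ‖f ω‖ ^ 2 ∂μ) ≤ C.toReal := by
  have hmem : MemLp f 2 μ := ⟨hf, h.trans_lt hC.lt_top⟩
  have key := hmem.eLpNorm_eq_integral_rpow_norm two_ne_zero ENNReal.ofNat_ne_top
  simp only [ENNReal.toReal_ofNat, Real.rpow_two] at key
  calc √(∫ ω, ‖f ω‖ ^ 2 ∂μ) = (eLpNorm f 2 μ).toReal := by
        rw [key, ENNReal.toReal_ofReal (by positivity), Real.sqrt_eq_rpow, one_div]
    _ ≤ C.toReal := ENNReal.toReal_mono hC h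

section MovingAverage

variable {𝕜 E : Type*} [NontriviallyNormedField 𝕜] [NormedAddCommGroup E] [NormedSpace 𝕜 E]

noncomputable def movingAverage (Φ : E →L[𝕜] E) (e : ℤ → E) (t : ℤ) : E :=
  ∑' j : ℕ, (Φ ^ j) (e (t - j))

noncomputable def coupledMovingAverage (Φ : E →L[𝕜] E) (e e' : ℤ → E) (m : ℕ) (t : ℤ) : E :=
  ∑ j ∈ range m, (Φ ^ j) (e (t - j)) + ∑' j : ℕ, (Φ ^ (m + j)) (e' (t - m - j))

variable {Φ : E →L[𝕜] E} {e : ℤ → E} {t : ℤ}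

theorem movingAverage_eq_apply_add (h : Summable fun j : ℕ => (Φ ^ j) (e (t - 1 - j))) :
    movingAverage Φ e t = Φ (movingAverage Φ e (t - 1)) + e t := by
  have hshift : (fun j : ℕ => (Φ ^ (j + 1)) (e (t - (j + 1 : ℕ)))) =
      fun j : ℕ => Φ ((Φ ^ j) (e (t - 1 - j))) := by
    funext j
    rw [pow_succ', Nat.cast_succ, sub_add_eq_sub_sub_swap]
    rfl
  rw [movingAverage, tsum_eq_zero_add' (hshift ▸ h.mapL Φ), hshift, ← Φ.map_tsum h]
  simp [movingAverage, add_comm]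

theorem movingAverage_eq_sum_add_tsum (h : Summable fun j : ℕ => (Φ ^ j) (e (t - j))) (m : ℕ) :
    movingAverage Φ e t =
      ∑ j ∈ range m, (Φ ^ j) (e (t - j)) + ∑' j : ℕ, (Φ ^ (m + j)) (e (t - m - j)) := by
  rw [movingAverage, ← h.sum_add_tsum_nat_add m]
  congr 1
  refine tsum_congr fun j => ?_
  rw [add_comm j m, Nat.cast_add, sub_add_eq_sub_sub]

end MovingAverage

section CausalSolution

variable {𝕜 E Ω : Type*} [NontriviallyNormedField 𝕜] [NormedAddCommGroup E] [NormedSpace 𝕜 E]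
  [CompleteSpace E] [MeasurableSpace Ω] {μ : Measure Ω} {Φ : E →L[𝕜] E}

theorem identDistrib_movingAverage [MeasurableSpace E] [BorelSpace E] [SecondCountableTopology E]
    {ε : ℤ → Ω → E} (hind : iIndepFun ε μ) (hid : ∀ k, IdentDistrib (ε k) (ε 0) μ μ) (t s : ℤ) :
    IdentDistrib (fun ω => movingAverage Φ (ε · ω) t) (fun ω => movingAverage Φ (ε · ω) s) μ μ := by
  have hpast (u : ℤ) : Function.Injective fun j : ℕ => u - j := fun i j hij => by simpa using hij
  have hpath : IdentDistrib (fun ω (j : ℕ) => ε (t - j) ω) (fun ω (j : ℕ) => ε (s - j) ω) μ μ :=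
    .pi (fun j => (hid _).trans (hid _).symm) (hind.precomp (hpast t)) (hind.precomp (hpast s))
  exact hpath.comp <|
    Measurable.tsum fun j => (Φ ^ j).continuous.measurable.comp (measurable_pi_apply j)

variable {p : ℝ≥0∞} {ε ε' : ℤ → Ω → E} {K : ℝ≥0∞}

theorem eLpNorm_movingAverage_sub_coupledMovingAverage_le (hΦ : ‖Φ‖ < 1) (hp : 1 ≤ p)
    (hε : ∀ k, AEStronglyMeasurable (ε k) μ) (hε' : ∀ k, AEStronglyMeasurable (ε' k) μ)
    (hK : K ≠ ∞) (hεK : ∀ k, eLpNorm (ε k) p μ ≤ K) (hε'K : ∀ k, eLpNorm (ε' k) p μ ≤ K)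
    (t : ℤ) (m : ℕ) :
    eLpNorm (fun ω => movingAverage Φ (ε · ω) t - coupledMovingAverage Φ (ε · ω) (ε' · ω) m t)
      p μ ≤ ‖Φ‖ₑ ^ m * (2 * (1 - ‖Φ‖ₑ)⁻¹ * K) := by
  let tail : (ℤ → Ω → E) → Ω → E := fun η ω => ∑' j : ℕ, (Φ ^ (m + j)) (η (t - m - j) ω)
  have htail {η : ℤ → Ω → E} (hη : ∀ k, AEStronglyMeasurable (η k) μ) :
      AEStronglyMeasurable (tail η) μ :=
    AEStronglyMeasurable.tsum fun j => (Φ ^ (m + j)).continuous.comp_aestronglyMeasurable (hη _)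
  have hsplit : (fun ω => movingAverage Φ (ε · ω) t - coupledMovingAverage Φ (ε · ω) (ε' · ω) m t)
      =ᵐ[μ] tail ε - tail ε' := by
    have hsum : ∀ᵐ ω ∂μ, Summable fun j : ℕ => (Φ ^ j) (ε (t - j) ω) :=
      ae_summable_pow_comp hΦ hp (fun j => hε (t - j)) hK (fun j => hεK _)
    filter_upwards [hsum] with ω hω
    rw [movingAverage_eq_sum_add_tsum (e := (ε · ω)) hω m, coupledMovingAverage,
      add_sub_add_left_eq_sub]
    rfl
  calc _ = eLpNorm (tail ε - tail ε') p μ := eLpNorm_congr_ae hsplit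
    _ ≤ eLpNorm (tail ε) p μ + eLpNorm (tail ε') p μ := eLpNorm_sub_le (htail hε) (htail hε') hp
    _ ≤ ‖Φ‖ₑ ^ m * (1 - ‖Φ‖ₑ)⁻¹ * K + ‖Φ‖ₑ ^ m * (1 - ‖Φ‖ₑ)⁻¹ * K :=
        add_le_add (eLpNorm_tsum_pow_comp_le Φ hp (fun j => hε _) (fun j => hεK _) m)
          (eLpNorm_tsum_pow_comp_le Φ hp (fun j => hε' _) (fun j => hε'K _) m)
    _ = ‖Φ‖ₑ ^ m * (2 * (1 - ‖Φ‖ₑ)⁻¹ * K) := by ring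

theorem sqrt_integral_norm_sq_movingAverage_sub_coupledMovingAverage_le [MeasurableSpace E]
    [BorelSpace E] [SecondCountableTopology E] (hΦ : ‖Φ‖ < 1)
    (hε : ∀ k, Measurable (ε k)) (hε' : ∀ k, Measurable (ε' k))
    (hK : K ≠ ∞) (hεK : ∀ k, eLpNorm (ε k) 2 μ ≤ K) (hε'K : ∀ k, eLpNorm (ε' k) 2 μ ≤ K)
    (t : ℤ) (m : ℕ) :
    √(∫ ω, ‖movingAverage Φ (ε · ω) t - coupledMovingAverage Φ (ε · ω) (ε' · ω) m t‖ ^ 2 ∂μ) ≤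
      ‖Φ‖ ^ m * (2 * (1 - ‖Φ‖ₑ)⁻¹ * K).toReal := by
  have hC : ‖Φ‖ₑ ^ m * (2 * (1 - ‖Φ‖ₑ)⁻¹ * K) ≠ ∞ := by
    have := Φ.inv_one_sub_enorm_ne_top hΦ
    finiteness
  have hmeas : Measurable fun ω =>
      movingAverage Φ (ε · ω) t - coupledMovingAverage Φ (ε · ω) (ε' · ω) m t := by
    unfold movingAverage coupledMovingAverage
    fun_prop
  simpa [ENNReal.toReal_mul] using sqrt_integral_norm_sq_le_toReal hmeas.aestronglyMeasurable hC
    (eLpNorm_movingAverage_sub_coupledMovingAverage_le hΦ one_le_two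
      (fun k => (hε k).aestronglyMeasurable) (fun k => (hε' k).aestronglyMeasurable) hK hεK hε'K t m)

end CausalSolution

theorem far1_stationary_solution_L2_m_approximable_general
    {H : Type*} [NormedAddCommGroup H] [InnerProductSpace ℝ H] [CompleteSpace H]
    [MeasurableSpace H] [BorelSpace H] [SecondCountableTopology H]
    {Ω : Type*} [MeasurableSpace Ω] (μ : Measure Ω) [IsProbabilityMeasure μ]
    (Φ : H →L[ℝ] H) (hΦ : ‖Φ‖ < 1)
    (ε ε' : ℤ → Ω → H)
    (hmeas : ∀ k, Measurable (ε k)) (hmeas' : ∀ k, Measurable (ε' k))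
    -- the innovations and their copies are jointly independent and identically distributed
    (hindep : iIndepFun (Sum.elim ε ε') μ)
    (hident : ∀ k : ℤ ⊕ ℤ, IdentDistrib (Sum.elim ε ε' k) (ε 0) μ μ)
    -- finite second moment
    (hL2 : MemLp (ε 0) 2 μ)
    -- the candidate solution and its coupled m-dependent approximations
    (X : ℤ → Ω → H) (hX : ∀ t ω, X t ω = ∑' j : ℕ, (Φ ^ j) (ε (t - j) ω))
    (Xm : ℕ → ℤ → Ω → H)
    (hXm : ∀ m t ω, Xm m t ω =
      (∑ j ∈ Finset.range m, (Φ ^ j) (ε (t - j) ω)) + ∑' j : ℕ, (Φ ^ (m + j)) (ε' (t - m - j) ω)) :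
    -- (1) X solves the AR(1) equation,
    (∀ t : ℤ, ∀ᵐ ω ∂μ, X t ω = Φ (X (t - 1) ω) + ε t ω) ∧
    -- (2) X is stationary,
    (∀ t : ℤ, IdentDistrib (X t) (X 0) μ μ) ∧
    -- (3) X is L²-m-approximable.
    (Summable fun m : ℕ => Real.sqrt (∫ ω, ‖X 0 ω - Xm (m + 1) 0 ω‖ ^ 2 ∂μ)) := by
  obtain rfl : X = fun t ω => movingAverage Φ (ε · ω) t := funext₂ hX
  obtain rfl : Xm = fun m t ω => coupledMovingAverage Φ (ε · ω) (ε' · ω) m t := funext₃ hXm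
  beta_reduce
  have hind : iIndepFun ε μ := hindep.precomp (g := Sum.inl) Sum.inl_injective
  have hid (k : ℤ) : IdentDistrib (ε k) (ε 0) μ μ := hident (Sum.inl k)
  set K := eLpNorm (ε 0) 2 μ
  have hεK (k : ℤ) : eLpNorm (ε k) 2 μ ≤ K := ((hid k).eLpNorm_eq 2).le
  have hε'K (k : ℤ) : eLpNorm (ε' k) 2 μ ≤ K := ((hident (Sum.inr k)).eLpNorm_eq 2).le
  refine ⟨fun t => ?_, fun t => identDistrib_movingAverage hind hid t 0, ?_⟩
  · have hsum : ∀ᵐ ω ∂μ, Summable fun j : ℕ => (Φ ^ j) (ε (t - 1 - j) ω) :=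
      ae_summable_pow_comp hΦ one_le_two (fun j => (hmeas _).aestronglyMeasurable) hL2.2.ne
        (fun j => hεK _)
    filter_upwards [hsum] with ω hω
    exact movingAverage_eq_apply_add (e := (ε · ω)) hω
  · set C := (2 * (1 - ‖Φ‖ₑ)⁻¹ * K).toReal
    have hgeom : Summable fun m : ℕ => ‖Φ‖ ^ (m + 1) * C :=
      (summable_nat_add_iff (f := fun n => ‖Φ‖ ^ n * C) 1).2
        ((summable_geometric_of_lt_one (norm_nonneg Φ) hΦ).mul_right C)
    exact .of_nonneg_of_le (fun m => Real.sqrt_nonneg _)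
      (fun m => sqrt_integral_norm_sq_movingAverage_sub_coupledMovingAverage_le hΦ hmeas hmeas'
        hL2.2.ne hεK hε'K 0 (m + 1)) hgeom

/-- A stationary functional AR(1) process `X_t = Φ(X_{t-1}) + ε_t`, with
`‖Φ‖_op < 1` and i.i.d. mean-zero innovations `ε_t ∈ H` with `E‖ε_0‖² < ∞`, admits the
stationary solution `X_t = Σ_{j≥0} Φ^j(ε_{t-j})` and is `L²`-m-approximable: with the coupled
versions `X_t^{(m)} = Σ_{j<m} Φ^j(ε_{t-j}) + Σ_{j≥m} Φ^j(ε'_{t-j})` built from independent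
copies `ε'`, one has `Σ_{m≥1} (E‖X_0 − X_0^{(m)}‖²)^{1/2} < ∞`. -/
theorem far1_stationary_solution_L2_m_approximable
    {H : Type*} [NormedAddCommGroup H] [InnerProductSpace ℝ H] [CompleteSpace H]
    [MeasurableSpace H] [BorelSpace H] [SecondCountableTopology H]
    {Ω : Type*} [MeasurableSpace Ω] (μ : Measure Ω) [IsProbabilityMeasure μ]
    (Φ : H →L[ℝ] H) (hΦ : ‖Φ‖ < 1)
    (ε ε' : ℤ → Ω → H)
    (hmeas : ∀ k, Measurable (ε k)) (hmeas' : ∀ k, Measurable (ε' k))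
    -- the innovations and their copies are jointly independent and identically distributed
    (hindep : iIndepFun (Sum.elim ε ε') μ)
    (hident : ∀ k : ℤ ⊕ ℤ, IdentDistrib (Sum.elim ε ε' k) (ε 0) μ μ)
    -- mean zero and finite second moment
    (hmean : ∫ ω, ε 0 ω ∂μ = 0) (hL2 : MemLp (ε 0) 2 μ)
    -- the candidate solution and its coupled m-dependent approximations
    (X : ℤ → Ω → H) (hX : ∀ t ω, X t ω = ∑' j : ℕ, (Φ ^ j) (ε (t - j) ω))
    (Xm : ℕ → ℤ → Ω → H)
    (hXm : ∀ m t ω, Xm m t ω =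
      (∑ j ∈ Finset.range m, (Φ ^ j) (ε (t - j) ω)) + ∑' j : ℕ, (Φ ^ (m + j)) (ε' (t - m - j) ω)) :
    -- (1) X solves the AR(1) equation,
    (∀ t : ℤ, ∀ᵐ ω ∂μ, X t ω = Φ (X (t - 1) ω) + ε t ω) ∧
    -- (2) X is stationary,
    (∀ t : ℤ, IdentDistrib (X t) (X 0) μ μ) ∧
    -- (3) X is L²-m-approximable.
    (Summable fun m : ℕ => Real.sqrt (∫ ω, ‖X 0 ω - Xm (m + 1) 0 ω‖ ^ 2 ∂μ)) :=
  far1_stationary_solution_L2_m_approximable_general μ Φ hΦ ε ε' hmeas hmeas' hindep hident hL2 X hX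
    Xm hXm
end

section
/- Let C and Ĉ be self-adjoint compact operators on a Hilbert space H with eigenvalues λ_1 > λ_2 > … and λ̂_1 ≥ λ̂_2 ≥ …, and unit eigenfunctions γ_p, γ̂_p with ⟨γ_p, γ̂_p⟩ ≥ 0. If α_p = min(λ_{p-1} − λ_p, λ_p − λ_{p+1}) > 0, then ‖γ̂_p − γ_p‖ ≤ 2√2 ‖Ĉ − C‖_op / α_p. -/
/-!
Weyl's inequality `|λ̂_p - λ_p| ≤ ‖Ĉ - C‖` follows from min-max: a nonzero vector in the span of
`γ̂_0, …, γ̂_p` orthogonal to `γ_0, …, γ_{p-1}` has Rayleigh quotient at least `λ̂_p` for `Ĉ` and at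
most `λ_p` for `C`. Hence, when `2‖Ĉ - C‖ < α`, `λ̂_p` stays at distance `α / 2` from every other
`λ_j`. Expanding `(Ĉ - C) γ̂_p = λ̂_p γ̂_p - C γ̂_p` in the eigenbasis `γ` then gives
`(α / 2)² (1 - ⟪γ_p, γ̂_p⟫²) ≤ ‖Ĉ - C‖²`, and for unit vectors with `c = ⟪γ_p, γ̂_p⟫ ≥ 0`,
`‖γ̂_p - γ_p‖² = 2 (1 - c) ≤ 2 (1 - c²)`.
-/

open scoped InnerProductSpace

section

variable {H : Type*} [NormedAddCommGroup H] [InnerProductSpace ℝ H]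

theorem LinearMap.IsSymmetric.inner_apply_of_apply_eq_smul {A : H →ₗ[ℝ] H} (hA : A.IsSymmetric)
    {u : H} {μ : ℝ} (hu : A u = μ • u) (x : H) : ⟪u, A x⟫_ℝ = μ * ⟪u, x⟫_ℝ := by
  rw [← hA, hu, real_inner_smul_left]

theorem norm_sub_sq_le_two_mul_one_sub_inner_sq {x y : H} (hx : ‖x‖ = 1) (hy : ‖y‖ = 1)
    (hxy : 0 ≤ ⟪x, y⟫_ℝ) : ‖y - x‖ ^ 2 ≤ 2 * (1 - ⟪x, y⟫_ℝ ^ 2) := by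
  have hle : ⟪x, y⟫_ℝ ≤ 1 := by simpa [hx, hy] using real_inner_le_norm x y
  rw [norm_sub_sq_real, hx, hy, real_inner_comm]
  nlinarith

theorem Submodule.exists_mem_orthogonal_ne_zero_of_finrank_lt (U K : Submodule ℝ H)
    [FiniteDimensional ℝ U] [FiniteDimensional ℝ K]
    (h : Module.finrank ℝ U < Module.finrank ℝ K) : ∃ x ∈ K, x ∈ Uᗮ ∧ x ≠ 0 := by
  obtain ⟨⟨x, hxK⟩, hker, hx0⟩ := Submodule.exists_mem_ne_zero_of_ne_bot
    (LinearMap.ker_ne_bot_of_finrank_lt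
      (f := (U.orthogonalProjectionOnto : H →ₗ[ℝ] U) ∘ₗ K.subtype) h)
  exact ⟨x, hxK, U.orthogonalProjectionOnto_eq_zero_iff.mp hker, by simpa using hx0⟩

theorem real_inner_apply_self_le_add_norm_sub_mul (A B : H →L[ℝ] H) (x : H) :
    ⟪B x, x⟫_ℝ ≤ ⟪A x, x⟫_ℝ + ‖B - A‖ * ‖x‖ ^ 2 := by
  calc ⟪B x, x⟫_ℝ = ⟪A x, x⟫_ℝ + ⟪(B - A) x, x⟫_ℝ := by
        rw [sub_apply, inner_sub_left]; ring
    _ ≤ ⟪A x, x⟫_ℝ + ‖(B - A) x‖ * ‖x‖ := by gcongr; exact real_inner_le_norm _ _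
    _ ≤ ⟪A x, x⟫_ℝ + ‖B - A‖ * ‖x‖ ^ 2 := by
        rw [sq, ← mul_assoc]; gcongr; exact (B - A).le_opNorm x

namespace HilbertBasis

variable {ι : Type*} (b : HilbertBasis ι ℝ H)

theorem hasSum_inner_sq (x : H) : HasSum (fun i => ⟪b i, x⟫_ℝ ^ 2) (‖x‖ ^ 2) := by
  simpa only [real_inner_comm x, ← sq, real_inner_self_eq_norm_sq] using
    b.hasSum_inner_mul_inner x x

variable {A : H →ₗ[ℝ] H} {μ : ι → ℝ}

theorem hasSum_mul_inner_sq (hA : A.IsSymmetric) (hμ : ∀ i, A (b i) = μ i • b i)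
    (x : H) : HasSum (fun i => μ i * ⟪b i, x⟫_ℝ ^ 2) ⟪A x, x⟫_ℝ := by
  rw [real_inner_comm]
  refine (b.hasSum_inner_mul_inner x (A x)).congr_fun fun i => ?_
  rw [hA.inner_apply_of_apply_eq_smul (hμ i), real_inner_comm x]
  ring

theorem inner_apply_self_le (hA : A.IsSymmetric) (hμ : ∀ i, A (b i) = μ i • b i)
    {x : H} {c : ℝ} (hx : ∀ i, ⟪b i, x⟫_ℝ ≠ 0 → μ i ≤ c) :
    ⟪A x, x⟫_ℝ ≤ c * ‖x‖ ^ 2 := by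
  refine hasSum_le (fun i => ?_) (b.hasSum_mul_inner_sq hA hμ x)
    ((b.hasSum_inner_sq x).mul_left c)
  by_cases h : ⟪b i, x⟫_ℝ = 0
  · simp [h]
  · exact mul_le_mul_of_nonneg_right (hx i h) (sq_nonneg _)

theorem le_inner_apply_self (hA : A.IsSymmetric) (hμ : ∀ i, A (b i) = μ i • b i)
    {x : H} {c : ℝ} (hx : ∀ i, ⟪b i, x⟫_ℝ ≠ 0 → c ≤ μ i) :
    c * ‖x‖ ^ 2 ≤ ⟪A x, x⟫_ℝ := by
  refine hasSum_le (fun i => ?_) ((b.hasSum_inner_sq x).mul_left c)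
    (b.hasSum_mul_inner_sq hA hμ x)
  by_cases h : ⟪b i, x⟫_ℝ = 0
  · simp [h]
  · exact mul_le_mul_of_nonneg_right (hx i h) (sq_nonneg _)

theorem sq_mul_sub_inner_sq_le (hA : A.IsSymmetric) (hμ : ∀ i, A (b i) = μ i • b i)
    {ν δ : ℝ} {p : ι} (hδ : 0 ≤ δ) (hgap : ∀ j ≠ p, δ ≤ |ν - μ j|) (y : H) :
    δ ^ 2 * (‖y‖ ^ 2 - ⟪b p, y⟫_ℝ ^ 2) ≤ ‖ν • y - A y‖ ^ 2 := by
  classical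
  -- `ν • y - A y` has coordinates `(ν - μ j) * ⟪b j, y⟫`; compare with `y` minus its `p`-th term
  have hres := b.hasSum_inner_sq (ν • y - A y)
  simp only [inner_sub_right, real_inner_smul_right,
    hA.inner_apply_of_apply_eq_smul (hμ _)] at hres
  have hrest := ((b.hasSum_inner_sq y).update p 0).mul_left (δ ^ 2)
  rw [zero_sub, neg_add_eq_sub] at hrest
  refine hasSum_le (fun j => ?_) hrest hres
  rcases eq_or_ne j p with rfl | hj
  · simp only [Function.update_self, mul_zero]; positivity
  · rw [Function.update_of_ne hj, ← sub_mul, mul_pow]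
    refine mul_le_mul_of_nonneg_right ?_ (sq_nonneg _)
    simpa only [sq_abs] using pow_le_pow_left₀ hδ (hgap j hj) 2

theorem eigenvalue_le_add_norm_sub (b b' : HilbertBasis ℕ ℝ H) {A B : H →L[ℝ] H}
    (hA : (A : H →ₗ[ℝ] H).IsSymmetric) (hB : (B : H →ₗ[ℝ] H).IsSymmetric) {μ ν : ℕ → ℝ}
    (hμ : Antitone μ) (hν : Antitone ν) (hAμ : ∀ i, A (b i) = μ i • b i)
    (hBν : ∀ i, B (b' i) = ν i • b' i) (p : ℕ) : ν p ≤ μ p + ‖B - A‖ := by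
  set U := Submodule.span ℝ (Set.range fun i : Fin p => b i)
  set K := Submodule.span ℝ (Set.range fun i : Fin (p + 1) => b' i)
  have hdim : Module.finrank ℝ U < Module.finrank ℝ K := by
    rw [finrank_span_eq_card (b := fun i : Fin (p + 1) => b' i)
      (b'.orthonormal.comp _ Fin.val_injective).linearIndependent, Fintype.card_fin]
    exact (finrank_range_le_card _).trans_lt (by simp)
  have : FiniteDimensional ℝ U := .span_of_finite ℝ (Set.finite_range _)
  have : FiniteDimensional ℝ K := .span_of_finite ℝ (Set.finite_range _)
  obtain ⟨y, hyK, hyU, hy0⟩ := U.exists_mem_orthogonal_ne_zero_of_finrank_lt K hdim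
  have hAy : ⟪A y, y⟫_ℝ ≤ μ p * ‖y‖ ^ 2 :=
    b.inner_apply_self_le hA hAμ fun i hi => hμ <| not_lt.1 fun hip =>
      hi (Submodule.inner_right_of_mem_orthogonal (Submodule.subset_span
        (Set.mem_range_self (f := fun j : Fin p => b j) ⟨i, hip⟩)) hyU)
  have hBy : ν p * ‖y‖ ^ 2 ≤ ⟪B y, y⟫_ℝ :=
    b'.le_inner_apply_self hB hBν fun i hi => hν <| not_lt.1 fun hpi => hi <|
      Submodule.mem_orthogonal_singleton_iff_inner_right.1 <| Submodule.span_le.2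
        (Set.range_subset_iff.2 fun j => Submodule.mem_orthogonal_singleton_iff_inner_right.2 <|
          b'.orthonormal.inner_eq_zero (by omega)) hyK
  have hy : 0 < ‖y‖ ^ 2 := by positivity
  refine le_of_mul_le_mul_right ?_ hy
  linarith [real_inner_apply_self_le_add_norm_sub_mul A B y]

theorem abs_eigenvalue_sub_le_norm_sub (b b' : HilbertBasis ℕ ℝ H) {A B : H →L[ℝ] H}
    (hA : (A : H →ₗ[ℝ] H).IsSymmetric) (hB : (B : H →ₗ[ℝ] H).IsSymmetric) {μ ν : ℕ → ℝ}
    (hμ : Antitone μ) (hν : Antitone ν) (hAμ : ∀ i, A (b i) = μ i • b i)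
    (hBν : ∀ i, B (b' i) = ν i • b' i) (p : ℕ) : |ν p - μ p| ≤ ‖B - A‖ := by
  have hup := b.eigenvalue_le_add_norm_sub b' hA hB hμ hν hAμ hBν p
  have hdown := b'.eigenvalue_le_add_norm_sub b hB hA hν hμ hBν hAμ p
  rw [norm_sub_rev] at hdown
  exact abs_sub_le_iff.2 ⟨by linarith, by linarith⟩

end HilbertBasis

end

theorem Antitone.min_sub_le_abs_sub {α : Type*} [AddCommGroup α] [LinearOrder α]
    [IsOrderedAddMonoid α] {f : ℕ → α} (hf : Antitone f) {p j : ℕ} (hj : j ≠ p) :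
    min (f (p - 1) - f p) (f p - f (p + 1)) ≤ |f p - f j| := by
  rcases lt_or_gt_of_ne hj with hjp | hpj
  · calc min (f (p - 1) - f p) (f p - f (p + 1)) ≤ f (p - 1) - f p := min_le_left _ _
      _ ≤ f j - f p := sub_le_sub_right (hf (by omega)) _
      _ ≤ |f p - f j| := abs_sub_comm (f j) (f p) ▸ le_abs_self _
  · calc min (f (p - 1) - f p) (f p - f (p + 1)) ≤ f p - f (p + 1) := min_le_right _ _
      _ ≤ f p - f j := sub_le_sub_left (hf hpj) _
      _ ≤ |f p - f j| := le_abs_self _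

theorem eigenfunction_perturbation_bound_general
    {H : Type*} [NormedAddCommGroup H] [InnerProductSpace ℝ H] [CompleteSpace H]
    (C Chat : H →L[ℝ] H)
    (hsa : IsSelfAdjoint C) (hsahat : IsSelfAdjoint Chat)
    (lam lamhat : ℕ → ℝ) (γ γhat : ℕ → H)
    (hlam : StrictAnti lam) (hlamhat : Antitone lamhat)
    (horth : Orthonormal ℝ γ) (horthhat : Orthonormal ℝ γhat)
    (heig : ∀ j, C (γ j) = lam j • γ j) (heighat : ∀ j, Chat (γhat j) = lamhat j • γhat j)
    (hspan : (Submodule.span ℝ (Set.range γ)).topologicalClosure = ⊤)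
    (hspanhat : (Submodule.span ℝ (Set.range γhat)).topologicalClosure = ⊤)
    (p : ℕ)
    (hsign : 0 ≤ ⟪γ p, γhat p⟫_ℝ)
    (α : ℝ) (hα : α = min (lam (p - 1) - lam p) (lam p - lam (p + 1))) (hαpos : 0 < α) :
    ‖γhat p - γ p‖ ≤ 2 * Real.sqrt 2 * ‖Chat - C‖ / α := by
  set ε := ‖Chat - C‖
  obtain ⟨b, rfl⟩ : ∃ b : HilbertBasis ℕ ℝ H, ⇑b = γ := ⟨_, HilbertBasis.coe_mk horth hspan.ge⟩
  obtain ⟨bhat, rfl⟩ : ∃ b : HilbertBasis ℕ ℝ H, ⇑b = γhat :=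
    ⟨_, HilbertBasis.coe_mk horthhat hspanhat.ge⟩
  have hweyl : |lamhat p - lam p| ≤ ε := b.abs_eigenvalue_sub_le_norm_sub bhat hsa.isSymmetric
    hsahat.isSymmetric hlam.antitone hlamhat heig heighat p
  have hkey : (α / 2) ^ 2 * (1 - ⟪b p, bhat p⟫_ℝ ^ 2) ≤ ε ^ 2 := by
    rcases le_or_gt α (2 * ε) with hle | hlt
    · nlinarith [sq_nonneg ⟪b p, bhat p⟫_ℝ]
    have hgap : ∀ j ≠ p, α / 2 ≤ |lamhat p - lam j| := fun j hj => by
      have hsep := hα ▸ hlam.antitone.min_sub_le_abs_sub hj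
      have htri := abs_sub_le (lam p) (lamhat p) (lam j)
      rw [abs_sub_comm (lam p) (lamhat p)] at htri
      linarith
    calc (α / 2) ^ 2 * (1 - ⟪b p, bhat p⟫_ℝ ^ 2)
        = (α / 2) ^ 2 * (‖bhat p‖ ^ 2 - ⟪b p, bhat p⟫_ℝ ^ 2) := by
          rw [bhat.orthonormal.1 p]; ring
      _ ≤ ‖lamhat p • bhat p - C (bhat p)‖ ^ 2 :=
        b.sq_mul_sub_inner_sq_le hsa.isSymmetric heig (by positivity) hgap _
      _ = ‖(Chat - C) (bhat p)‖ ^ 2 := by rw [sub_apply, heighat]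
      _ ≤ ε ^ 2 := by
        gcongr; simpa [bhat.orthonormal.1 p] using (Chat - C).le_opNorm (bhat p)
  have hsq :=
    norm_sub_sq_le_two_mul_one_sub_inner_sq (b.orthonormal.1 p) (bhat.orthonormal.1 p) hsign
  refine (pow_le_pow_iff_left₀ (norm_nonneg _) (by positivity) two_ne_zero).1 ?_
  rw [div_pow, mul_pow, mul_pow, Real.sq_sqrt zero_le_two, le_div_iff₀ (by positivity)]
  nlinarith

/-- Eigenfunction perturbation bound: let `C`, `Ĉ` be self-adjoint compact
operators on a Hilbert space with eigenvalues `λ_1 > λ_2 > …` and `λ̂_1 ≥ λ̂_2 ≥ …` and unit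
eigenfunctions `γ_p`, `γ̂_p` (each family spanning a dense subspace), with `⟨γ_p, γ̂_p⟩ ≥ 0`.
If `α_p = min(λ_{p-1} − λ_p, λ_p − λ_{p+1}) > 0`, then
`‖γ̂_p − γ_p‖ ≤ 2√2 ‖Ĉ − C‖_op / α_p`. -/
theorem eigenfunction_perturbation_bound
    {H : Type*} [NormedAddCommGroup H] [InnerProductSpace ℝ H] [CompleteSpace H]
    (C Chat : H →L[ℝ] H)
    (hsa : IsSelfAdjoint C) (hsahat : IsSelfAdjoint Chat)
    (hcpt : IsCompactOperator C) (hcpthat : IsCompactOperator Chat)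
    (lam lamhat : ℕ → ℝ) (γ γhat : ℕ → H)
    (hlam : StrictAnti lam) (hlamhat : Antitone lamhat)
    (horth : Orthonormal ℝ γ) (horthhat : Orthonormal ℝ γhat)
    (heig : ∀ j, C (γ j) = lam j • γ j) (heighat : ∀ j, Chat (γhat j) = lamhat j • γhat j)
    (hspan : (Submodule.span ℝ (Set.range γ)).topologicalClosure = ⊤)
    (hspanhat : (Submodule.span ℝ (Set.range γhat)).topologicalClosure = ⊤)
    (p : ℕ) (hp : 1 ≤ p)
    (hsign : 0 ≤ ⟪γ p, γhat p⟫_ℝ)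
    (α : ℝ) (hα : α = min (lam (p - 1) - lam p) (lam p - lam (p + 1))) (hαpos : 0 < α) :
    ‖γhat p - γ p‖ ≤ 2 * Real.sqrt 2 * ‖Chat - C‖ / α :=
  eigenfunction_perturbation_bound_general C Chat hsa hsahat lam lamhat γ γhat hlam hlamhat horth
    horthhat heig heighat hspan hspanhat p hsign α hα hαpos
end
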